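/- Let S be a 3-cutset of G. If G − S has more than 3 connected components, then S is independent with every 3-cutset of G. If G − S has exactly 3 connected components and T is a 3-cutset dependent with S, then there exists a vertex a ∈ S such that {a} is a connected component of G − T and every connected component of G − S contains a vertex of T (that is, T is a trivial cutset subordinated to S). -/

import Mathlib

/-!
Every vertex of a 3-cutset `T` has a neighbour in each component of `G − T`: otherwise the two
other vertices would separate the graph. Hence if some component of `G − S` avoids `T`, it ties
all of `S \ T` together in `G − T`; a component of `G − T` away from `S \ T` then avoids `S`,
lies inside one component of `G − S` and is adjacent to all of `T`, so `S` and `T` are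
independent. With more than three components of `G − S`, one of them avoids `T`. With exactly
three and `T` dependent with `S`, each component meets `T`, so the three vertices of `T` lie one
in each. Then every component of `G − T` meets `S` (one avoiding `S` would pull all of `T` into
a single component of `G − S`), so one of the at least two components meets `S` in a single
vertex `a`, and that component is `{a}`.
-/

namespace Paper

variable {V : Type*}

/-- `S ⊆ V(G)` is a cutset of `G`: the graph `G − S` is disconnected. -/
def IsCutset (G : SimpleGraph V) (S : Set V) : Prop :=
  ¬ (G.induce (Sᶜ : Set V)).Connected

/-- A 3-cutset: a cutset of exactly 3 vertices. -/
def IsThreeCutset (G : SimpleGraph V) (S : Set V) : Prop :=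
  S.ncard = 3 ∧ IsCutset G S

/-- `G` is triconnected: at least 4 vertices and deleting any at most 2 vertices
leaves a connected graph. -/
def IsTriconnected [Fintype V] (G : SimpleGraph V) : Prop :=
  4 ≤ Fintype.card V ∧
    ∀ X : Set V, X.ncard ≤ 2 → (G.induce (Xᶜ : Set V)).Connected

/-- `x` and `y` both survive the deletion of `R` and lie in the same connected
component of `G − R`. -/
def ReachOutside (G : SimpleGraph V) (R : Set V) (x y : V) : Prop :=
  ∃ (hx : x ∈ (Rᶜ : Set V)) (hy : y ∈ (Rᶜ : Set V)),
    (G.induce (Rᶜ : Set V)).Reachable ⟨x, hx⟩ ⟨y, hy⟩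

/-- `R` splits `X`: two vertices of `X \ R` lie in different connected components
of `G − R`. -/
def Splits (G : SimpleGraph V) (R X : Set V) : Prop :=
  ∃ x ∈ X, ∃ y ∈ X, x ∉ R ∧ y ∉ R ∧ ¬ ReachOutside G R x y

/-- Two 3-cutsets are dependent iff one splits the other. -/
def Dependent (G : SimpleGraph V) (S T : Set V) : Prop :=
  Splits G S T ∨ Splits G T S

/-- The connected component of `G − R` containing `u` (empty if `u ∈ R`). -/
def compOutside (G : SimpleGraph V) (R : Set V) (u : V) : Set V :=
  {y | ReachOutside G R u y}

/-- `C` is a connected component of `G − R`. -/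
def IsCompOutside (G : SimpleGraph V) (R : Set V) (C : Set V) : Prop :=
  ∃ u, u ∉ R ∧ C = compOutside G R u

variable {G : SimpleGraph V} {R S T X A : Set V} {a d p t u v w x y z : V}

namespace ReachOutside

lemma notMem_right (h : ReachOutside G R x y) : y ∉ R := h.2.1

lemma symm (h : ReachOutside G R x y) : ReachOutside G R y x :=
  ⟨h.2.1, h.1, h.2.2.symm⟩

lemma trans (h : ReachOutside G R x y) (h' : ReachOutside G R y z) : ReachOutside G R x z :=
  ⟨h.1, h'.2.1, h.2.2.trans h'.2.2⟩

lemma mem_of_forall_adj (h : ReachOutside G R x y)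
    (hA : ∀ u ∈ A, ∀ v, G.Adj u v → v ∉ R → v ∈ A) (hx : x ∈ A) : y ∈ A := by
  obtain ⟨_, _, ⟨q⟩⟩ := h
  suffices ∀ (a b : (Rᶜ : Set V)), (G.induce Rᶜ).Walk a b → a.1 ∈ A → b.1 ∈ A from
    this _ _ q hx
  intro a b q
  induction q with
  | nil => exact id
  | @cons _ c _ huv _ ih => exact fun ha => ih (hA _ ha _ huv c.2)

end ReachOutside

lemma reachOutside_of_adj (h : G.Adj x y) (hx : x ∉ R) (hy : y ∉ R) : ReachOutside G R x y :=
  ⟨hx, hy, SimpleGraph.Adj.reachable (G := G.induce Rᶜ) h⟩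

lemma mem_compOutside_self (hu : u ∉ R) : u ∈ compOutside G R u := ⟨hu, hu, .refl _⟩

lemma mem_compOutside_of_adj (hu : u ∈ compOutside G R p) (huv : G.Adj u v) (hv : v ∉ R) :
    v ∈ compOutside G R p :=
  ReachOutside.trans hu (reachOutside_of_adj huv hu.notMem_right hv)

lemma compOutside_subset_compOutside (hp : p ∉ T) (hD : Disjoint (compOutside G T p) S) :
    compOutside G T p ⊆ compOutside G S p := by
  have hpS : p ∉ S := Set.disjoint_left.mp hD (mem_compOutside_self hp)
  intro v hv
  refine (ReachOutside.mem_of_forall_adj (A := compOutside G T p ∩ compOutside G S p) hv ?_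
    ⟨mem_compOutside_self hp, mem_compOutside_self hpS⟩).2
  rintro q ⟨hqT, hqS⟩ v hqv hvT
  have hvT' := mem_compOutside_of_adj hqT hqv hvT
  exact ⟨hvT', mem_compOutside_of_adj hqS hqv (Set.disjoint_left.mp hD hvT')⟩

lemma connectedComponentMk_eq_iff {hx : x ∈ Rᶜ} {hy : y ∈ Rᶜ} :
    (G.induce Rᶜ).connectedComponentMk ⟨x, hx⟩ =
        (G.induce Rᶜ).connectedComponentMk ⟨y, hy⟩ ↔ ReachOutside G R x y :=
  SimpleGraph.ConnectedComponent.eq.trans ⟨fun h => ⟨hx, hy, h⟩, fun h => h.2.2⟩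

lemma IsCutset.exists_not_reachOutside (h : IsCutset G R) (hv : v ∉ R) :
    ∃ x y, x ∉ R ∧ y ∉ R ∧ ¬ ReachOutside G R x y := by
  by_contra! hc
  have : Nonempty (Rᶜ : Set V) := ⟨⟨v, hv⟩⟩
  exact h ⟨fun x y => (hc x y x.2 y.2).2.2⟩

lemma surjective_connectedComponentMk_of_forall_inter_nonempty
    (h : ∀ u ∉ S, (compOutside G S u ∩ T).Nonempty) :
    Function.Surjective fun t : (T \ S : Set V) =>
      (G.induce Sᶜ).connectedComponentMk ⟨t, t.2.2⟩ := by
  intro K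
  induction K using SimpleGraph.ConnectedComponent.ind with
  | h u =>
    obtain ⟨t, hut, ht⟩ := h u u.2
    exact ⟨⟨t, ht, hut.notMem_right⟩, connectedComponentMk_eq_iff.mpr hut.symm⟩

lemma exists_disjoint_compOutside_of_ncard_lt (hT : T.Finite)
    (h : T.ncard < Nat.card (G.induce Sᶜ).ConnectedComponent) :
    ∃ u ∉ S, Disjoint (compOutside G S u) T := by
  by_contra! hmeet
  have : Finite (T \ S : Set V) := hT.sdiff.to_subtype
  have hle := Nat.card_le_card_of_surjective _ <|
    surjective_connectedComponentMk_of_forall_inter_nonempty (G := G) fun u hu =>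
      Set.not_disjoint_iff_nonempty_inter.mp (hmeet u hu)
  rw [Nat.card_coe_set_eq] at hle
  have := Set.ncard_le_ncard (Set.sdiff_subset (s := T) (t := S)) hT
  omega

lemma disjoint_and_eq_of_card_connectedComponent_eq (hT : T.Finite)
    (h : ∀ u ∉ S, (compOutside G S u ∩ T).Nonempty)
    (hcard : Nat.card (G.induce Sᶜ).ConnectedComponent = T.ncard) :
    Disjoint S T ∧ ∀ t ∈ T, ∀ t' ∈ T, ReachOutside G S t t' → t = t' := by
  have : Finite (T \ S : Set V) := hT.sdiff.to_subtype
  have hsurj := surjective_connectedComponentMk_of_forall_inter_nonempty h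
  have hle := Nat.card_le_card_of_surjective _ hsurj
  rw [Nat.card_coe_set_eq] at hle
  have hTS : T \ S = T := Set.eq_of_subset_of_ncard_le Set.sdiff_subset (by omega) hT
  have hmem : ∀ t ∈ T, t ∈ T \ S := fun t ht => hTS.symm ▸ ht
  have hinj := ((Nat.bijective_iff_surjective_and_card _).mpr
    ⟨hsurj, by rw [Nat.card_coe_set_eq, hTS, hcard]⟩).1
  refine ⟨Set.disjoint_right.mpr fun t ht => (hmem t ht).2, fun t ht t' ht' htt' => ?_⟩
  exact congrArg Subtype.val
    (@hinj ⟨t, hmem t ht⟩ ⟨t', hmem t' ht'⟩ (connectedComponentMk_eq_iff.mpr htt'))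

lemma exists_compOutside_inter_eq_singleton [Finite V] (hR : IsCutset G R) (hv : v ∉ R)
    (hS : S.ncard ≤ 3) (hmeet : ∀ p ∉ R, (compOutside G R p ∩ S).Nonempty) :
    ∃ d ∉ R, ∃ a, compOutside G R d ∩ S = {a} := by
  obtain ⟨x, y, hx, hy, hxy⟩ := hR.exists_not_reachOutside hv
  have hdisj : Disjoint (compOutside G R x ∩ S) (compOutside G R y ∩ S) :=
    Set.disjoint_left.mpr fun z hzx hzy => hxy (hzx.1.trans hzy.1.symm)
  have hsum := Set.ncard_union_eq hdisj
  have hle : (compOutside G R x ∩ S ∪ compOutside G R y ∩ S).ncard ≤ S.ncard :=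
    Set.ncard_le_ncard (Set.union_subset Set.inter_subset_right Set.inter_subset_right)
  have hx1 := (Set.ncard_pos).mpr (hmeet x hx)
  have hy1 := (Set.ncard_pos).mpr (hmeet y hy)
  by_cases h1 : (compOutside G R x ∩ S).ncard = 1
  · exact ⟨x, hx, Set.ncard_eq_one.mp h1⟩
  · exact ⟨y, hy, Set.ncard_eq_one.mp (by omega)⟩

namespace IsTriconnected

variable [Fintype V]

lemma reachOutside (htri : IsTriconnected G) (hX : X.ncard ≤ 2) (hx : x ∉ X) (hy : y ∉ X) :
    ReachOutside G X x y :=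
  ⟨hx, hy, (htri.2 X hX).preconnected _ _⟩

lemma exists_notMem (htri : IsTriconnected G) (hT : T.ncard ≤ 3) : ∃ v, v ∉ T := by
  by_contra! h
  rw [Set.eq_univ_of_forall h, Set.ncard_univ, Nat.card_eq_fintype_card] at hT
  have := htri.1
  omega

/-- Otherwise `T \ {t}` would separate the component from `w`. -/
lemma exists_adj_compOutside (htri : IsTriconnected G) (hT : T.ncard ≤ 3) (ht : t ∈ T)
    (hp : p ∉ T) (hw : w ∉ T \ {t}) (hwp : w ∉ compOutside G T p) :
    ∃ q ∈ compOutside G T p, G.Adj t q := by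
  by_contra! h
  refine hwp ((htri.reachOutside (X := T \ {t}) ?_ (fun h => hp h.1) hw).mem_of_forall_adj ?_
    (mem_compOutside_self hp))
  · rw [Set.ncard_sdiff_singleton_of_mem ht]
    omega
  · intro q hq v hqv hv
    by_cases hvT : v ∈ T
    · obtain rfl : v = t := by_contra fun hvt => hv ⟨hvT, hvt⟩
      exact absurd hqv.symm (h q hq)
    · exact mem_compOutside_of_adj hq hqv hvT

lemma mem_compOutside_of_disjoint (htri : IsTriconnected G) (hT : T.ncard ≤ 3) (hp : p ∉ T)
    (hw : w ∉ T) (hwp : w ∉ compOutside G T p) (hD : Disjoint (compOutside G T p) S)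
    (ht : t ∈ T) (htS : t ∉ S) : t ∈ compOutside G S p := by
  obtain ⟨q, hq, htq⟩ := htri.exists_adj_compOutside hT ht hp (fun h => hw h.1) hwp
  exact mem_compOutside_of_adj (compOutside_subset_compOutside hp hD hq) htq.symm htS

theorem not_dependent (htri : IsTriconnected G) (hS : S.ncard ≤ 3) (hT : T.ncard ≤ 3)
    (hTcut : IsCutset G T) (hu : u ∉ S) (hC : Disjoint (compOutside G S u) T) :
    ¬ Dependent G S T := by
  have huT : u ∉ T := Set.disjoint_left.mp hC (mem_compOutside_self hu)
  have hSC : S \ T ⊆ compOutside G T u := by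
    rintro s ⟨hs, hsT⟩
    obtain ⟨q, hq, hsq⟩ := htri.exists_adj_compOutside hS hs hu (fun h => h.2 rfl)
      (fun h => h.notMem_right hs)
    exact mem_compOutside_of_adj (compOutside_subset_compOutside hu hC hq) hsq.symm hsT
  rintro (⟨t, ht, t', ht', htS, ht'S, hsplit⟩ | ⟨a, ha, b, hb, haT, hbT, hsplit⟩)
  · obtain ⟨x, y, hx, hy, hxy⟩ := hTcut.exists_not_reachOutside huT
    obtain ⟨d, hd, hud⟩ : ∃ d ∉ T, u ∉ compOutside G T d := by
      by_cases hxu : ReachOutside G T x u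
      · exact ⟨y, hy, fun hyu => hxy (hxu.trans hyu.symm)⟩
      · exact ⟨x, hx, hxu⟩
    have hD : Disjoint (compOutside G T d) S := Set.disjoint_left.mpr fun s hs hsS =>
      hud (hs.trans (hSC ⟨hsS, hs.notMem_right⟩).symm)
    have hTC : ∀ t ∈ T, t ∉ S → t ∈ compOutside G S d := fun t ht htS =>
      htri.mem_compOutside_of_disjoint hT hd huT hud hD ht htS
    exact hsplit ((hTC t ht htS).symm.trans (hTC t' ht' ht'S))
  · exact hsplit ((hSC ⟨ha, haT⟩).symm.trans (hSC ⟨hb, hbT⟩))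

/-- For `p ≠ a` in the component and `t` the vertex of `T` in the component of `p` in `G − S`,
the pair `{a, t}` would separate `p` from the rest of `S`. -/
theorem compOutside_eq_singleton (htri : IsTriconnected G) (hS : 1 < S.ncard)
    (hST : Disjoint S T) (huniq : ∀ t ∈ T, ∀ t' ∈ T, ReachOutside G S t t' → t = t')
    (hmeet : ∀ u ∉ S, (compOutside G S u ∩ T).Nonempty)
    (hda : compOutside G T d ∩ S = {a}) :
    compOutside G T d = {a} := by
  have ha : a ∈ compOutside G T d ∩ S := hda ▸ rfl
  refine Set.Subset.antisymm (fun p hp => ?_) (Set.singleton_subset_iff.mpr ha.1)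
  by_contra hpa
  have hpS : p ∉ S := fun hpS => hpa (hda ▸ ⟨hp, hpS⟩)
  obtain ⟨t, htp, ht⟩ := hmeet p hpS
  obtain ⟨s, hs, hsa⟩ := Set.exists_ne_of_one_lt_ncard hS a
  have hX : ({a, t} : Set V).ncard ≤ 2 := (Set.ncard_insert_le _ _).trans (by simp)
  have hpX : p ∉ ({a, t} : Set V) := by
    rintro (rfl | rfl)
    exacts [hpa rfl, hp.notMem_right ht]
  have hsX : s ∉ ({a, t} : Set V) := by
    rintro (rfl | rfl)
    exacts [hsa rfl, Set.disjoint_left.mp hST hs ht]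
  have hs' : s ∈ compOutside G T d ∩ compOutside G S p := by
    refine (htri.reachOutside hX hpX hsX).mem_of_forall_adj ?_ ⟨hp, mem_compOutside_self hpS⟩
    rintro q ⟨hqd, hqp⟩ v hqv hv
    simp only [Set.mem_insert_iff, Set.mem_singleton_iff, not_or] at hv
    have hvT : v ∉ T := fun hvT => hv.2 <| huniq v hvT t ht <|
      (mem_compOutside_of_adj hqp hqv (Set.disjoint_right.mp hST hvT)).symm.trans htp
    have hvd := mem_compOutside_of_adj hqd hqv hvT
    have hvS : v ∉ S := fun hvS => by
      have hva : v ∈ compOutside G T d ∩ S := ⟨hvd, hvS⟩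
      exact hv.1 (by rwa [hda] at hva)
    exact ⟨hvd, mem_compOutside_of_adj hqp hqv hvS⟩
  exact hs'.2.notMem_right hs

theorem exists_isCompOutside_singleton (htri : IsTriconnected G) (hS : S.ncard = 3)
    (hT : IsThreeCutset G T) (hcard : Nat.card (G.induce Sᶜ).ConnectedComponent = 3)
    (hmeet : ∀ u ∉ S, (compOutside G S u ∩ T).Nonempty) :
    ∃ a ∈ S, IsCompOutside G T {a} := by
  obtain ⟨hST, huniq⟩ :=
    disjoint_and_eq_of_card_connectedComponent_eq T.toFinite hmeet (hcard.trans hT.1.symm)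
  have hmeetT : ∀ p ∉ T, (compOutside G T p ∩ S).Nonempty := by
    intro p hp
    rw [← Set.not_disjoint_iff_nonempty_inter]
    intro hD
    obtain ⟨s, hs⟩ : S.Nonempty := Set.nonempty_of_ncard_ne_zero (by omega)
    obtain ⟨t, ht, t', ht', htt'⟩ := (Set.one_lt_ncard T.toFinite).mp (by rw [hT.1]; norm_num)
    have hTC : ∀ t ∈ T, t ∈ compOutside G S p := fun t ht =>
      htri.mem_compOutside_of_disjoint hT.1.le hp (Set.disjoint_left.mp hST hs)
        (fun h => Set.disjoint_left.mp hD h hs) hD ht (Set.disjoint_right.mp hST ht)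
    exact htt' (huniq t ht t' ht' ((hTC t ht).symm.trans (hTC t' ht')))
  obtain ⟨v, hv⟩ := htri.exists_notMem hT.1.le
  obtain ⟨d, hd, a, hda⟩ := exists_compOutside_inter_eq_singleton hT.2 hv hS.le hmeetT
  have ha : a ∈ compOutside G T d ∩ S := hda ▸ rfl
  exact ⟨a, ha.2, d, hd,
    (htri.compOutside_eq_singleton (by omega) hST huniq hmeet hda).symm⟩

end IsTriconnected

theorem stmt_15_general [Fintype V] (G : SimpleGraph V)
    (htri : IsTriconnected G)
    (S : Set V) (hS : IsThreeCutset G S) :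
    (3 < Nat.card (G.induce (Sᶜ : Set V)).ConnectedComponent →
      ∀ T : Set V, IsThreeCutset G T → ¬ Dependent G S T) ∧
    (Nat.card (G.induce (Sᶜ : Set V)).ConnectedComponent = 3 →
      ∀ T : Set V, IsThreeCutset G T → Dependent G S T →
        ∃ a ∈ S, IsCompOutside G T {a} ∧
          ∀ C : Set V, IsCompOutside G S C → (C ∩ T).Nonempty) := by
  refine ⟨fun hgt T hT => ?_, fun h3 T hT hdep => ?_⟩
  · obtain ⟨u, hu, hC⟩ := exists_disjoint_compOutside_of_ncard_lt T.toFinite (hT.1 ▸ hgt)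
    exact htri.not_dependent hS.1.le hT.1.le hT.2 hu hC
  · have hmeet : ∀ u ∉ S, (compOutside G S u ∩ T).Nonempty := fun u hu =>
      Set.not_disjoint_iff_nonempty_inter.mp fun hC =>
        htri.not_dependent hS.1.le hT.1.le hT.2 hu hC hdep
    obtain ⟨a, ha, hTa⟩ := htri.exists_isCompOutside_singleton hS.1 hT h3 hmeet
    refine ⟨a, ha, hTa, ?_⟩
    rintro C ⟨u, hu, rfl⟩
    exact hmeet u hu

/-- Lemma `l3v0`(1): a 3-cutset with more than 3 components is independent with
every 3-cutset; one with exactly 3 components only admits subordinated trivial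
dependent cutsets. -/
theorem stmt_15 [Fintype V] (G : SimpleGraph V)
    (htri : IsTriconnected G) (hbig : 6 < Fintype.card V)
    (S : Set V) (hS : IsThreeCutset G S) :
    (3 < Nat.card (G.induce (Sᶜ : Set V)).ConnectedComponent →
      ∀ T : Set V, IsThreeCutset G T → ¬ Dependent G S T) ∧
    (Nat.card (G.induce (Sᶜ : Set V)).ConnectedComponent = 3 →
      ∀ T : Set V, IsThreeCutset G T → Dependent G S T →
        ∃ a ∈ S, IsCompOutside G T {a} ∧
          ∀ C : Set V, IsCompOutside G S C → (C ∩ T).Nonempty) :=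
  stmt_15_general G htri S hS

end Paper
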